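/- Let n ∈ ℕ, s t : ℝ, and π : Equiv.Perm (Fin n) with f := the number of fixed points of π. Then Matrix.det (s • (1 : Matrix (Fin n) (Fin n) ℝ) − (t/2) • (P_π + P_πᵀ)) = (s − t)^f * (π.cycleType.map (fun ℓ => Matrix.det (L ℓ s t))).prod, where for ℓ ≥ 1, L ℓ s t : Matrix (Fin ℓ) (Fin ℓ) ℝ is defined by L ℓ s t := s • 1 − (t/2) • (S_ℓ + S_ℓᵀ) with S_ℓ the cyclic shift matrix (S_ℓ)_{j k} = 1 iff k = j + 1 (mod ℓ). -/

import Mathlib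

open Matrix

/-- The cyclic shift matrix `S_ℓ`, with `(S_ℓ)_{j k} = 1` iff `k = j + 1 (mod ℓ)`. -/
noncomputable def cyclicShift (ℓ : ℕ) : Matrix (Fin ℓ) (Fin ℓ) ℝ :=
  Matrix.of fun j k => if (k : ℕ) = ((j : ℕ) + 1) % ℓ then 1 else 0

/-- The matrix `L^ℓ(s,t) = s I − (t/2)(S_ℓ + S_ℓᵀ)`. -/
noncomputable def cycleLaplacian (ℓ : ℕ) (s t : ℝ) : Matrix (Fin ℓ) (Fin ℓ) ℝ :=
  s • 1 - (t/2) • (cyclicShift ℓ + (cyclicShift ℓ)ᵀ)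

namespace DetPermAux

variable {n : ℕ}

/-- The matrix whose determinant we compute. -/
noncomputable def M (s t : ℝ) (π : Equiv.Perm (Fin n)) : Matrix (Fin n) (Fin n) ℝ :=
  s • (1 : Matrix (Fin n) (Fin n) ℝ) - (t/2) • (π.permMatrix ℝ + (π.permMatrix ℝ)ᵀ)

lemma M_apply (s t : ℝ) (π : Equiv.Perm (Fin n)) (u v : Fin n) :
    M s t π u v = (if u = v then s else 0)
      - (t/2) * ((if v = π u then 1 else 0) + (if u = π v then 1 else 0)) := by
  simp [M, Matrix.one_apply, PEquiv.toMatrix_apply, Equiv.toPEquiv_apply,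
    Matrix.sub_apply, Matrix.add_apply, Matrix.smul_apply, Matrix.transpose_apply,
    mul_ite, Option.mem_def, eq_comm, mul_add]
  simp only [Equiv.eq_symm_apply]; exact if_congr eq_comm rfl rfl

lemma det_irrel {m : Type*} {d1 d2 : DecidableEq m} {f1 f2 : Fintype m} (A : Matrix m m ℝ) :
    @det m d1 f1 ℝ _ A = @det m d2 f2 ℝ _ A := by
  congr!

/-- Block decomposition of the determinant along a `π`-invariant predicate. -/
lemma det_M_block (s t : ℝ) (π : Equiv.Perm (Fin n)) (p : Fin n → Prop) [DecidablePred p]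
    (hp : ∀ u, p u ↔ p (π u)) :
    (M s t π).det = (toSquareBlockProp (M s t π) p).det
      * (toSquareBlockProp (M s t π) fun u => ¬ p u).det := by
  apply twoBlockTriangular_det'
  intro u hu v hv
  rw [M_apply]
  have h1 : u ≠ v := fun h => hv (h ▸ hu)
  have h2 : v ≠ π u := fun h => hv (h ▸ (hp u).1 hu)
  have h3 : u ≠ π v := by
    intro h
    exact hv ((hp v).2 (h ▸ hu))
  simp [h1, h2, h3]

/-- The block on a set of fixed points has determinant `(s-t)^card`. -/
lemma det_M_fixed_block_aux (s t : ℝ) (π : Equiv.Perm (Fin n)) (p : Fin n → Prop) [DecidablePred p]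
    (hp : ∀ u, p u → π u = u) :
    (toSquareBlockProp (M s t π) p).det = (s - t) ^ Fintype.card {u // p u} := by
  have h : toSquareBlockProp (M s t π) p = (s - t) • (1 : Matrix {u // p u} {u // p u} ℝ) := by
    ext ⟨u, hu⟩ ⟨v, hv⟩
    rw [toSquareBlockProp, Matrix.toBlock_apply, M_apply, hp u hu, hp v hv]
    by_cases h : u = v
    · simp [h, Matrix.one_apply, Subtype.ext_iff]; ring
    · simp [h, Matrix.one_apply, Subtype.ext_iff, eq_comm]
  rw [h, det_smul, det_one, mul_one]

/-- Instance-generic version of `det_M_fixed_block_aux`. -/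
lemma det_M_fixed_block (s t : ℝ) (π : Equiv.Perm (Fin n)) (p : Fin n → Prop) [DecidablePred p]
    (hp : ∀ u, p u → π u = u) {dec : DecidableEq {u // p u}} {ft : Fintype {u // p u}} :
    @det _ dec ft ℝ _ (toSquareBlockProp (M s t π) p)
      = (s - t) ^ (Finset.univ.filter p).card := by
  refine (det_irrel _).trans ((det_M_fixed_block_aux s t π p hp).trans ?_)
  rw [Fintype.card_subtype]

lemma exists_cycle_equiv (σ : Equiv.Perm (Fin n)) (hσ : σ.IsCycle) :
    ∃ e : Fin σ.support.card ≃ {u // u ∈ σ.support},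
      ∀ j k : Fin σ.support.card,
        ((σ (e j) : Fin n) = e k) ↔ (k : ℕ) = ((j : ℕ) + 1) % σ.support.card := by
  classical
  set ℓ := σ.support.card with hℓ
  have hcyc : σ.IsCycleOn (σ.support : Set (Fin n)) := by
    rw [Equiv.Perm.coe_support_eq_set_support]; exact hσ.isCycleOn
  have hℓ2 : 2 ≤ ℓ := hσ.two_le_card_support
  obtain ⟨a, ha⟩ : ∃ a, a ∈ σ.support := Finset.card_pos.1 (by omega)
  have key : ∀ i j : ℕ, (σ ^ i) a = (σ ^ j) a ↔ i ≡ j [MOD ℓ] := fun i j =>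
    hcyc.pow_apply_eq_pow_apply ha
  have f_mem : ∀ j : Fin ℓ, (σ ^ (j : ℕ)) a ∈ σ.support := fun j =>
    Equiv.Perm.pow_apply_mem_support.2 ha
  set f : Fin ℓ → {u // u ∈ σ.support} := fun j => ⟨(σ ^ (j : ℕ)) a, f_mem j⟩ with hf
  have finj : Function.Injective f := by
    intro i j hij
    have := (key i j).1 (Subtype.ext_iff.1 hij)
    have hi := i.isLt; have hj := j.isLt
    exact Fin.ext ((Nat.mod_eq_of_lt hi) ▸ (Nat.mod_eq_of_lt hj) ▸ this)
  have fbij : Function.Bijective f := by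
    rw [Fintype.bijective_iff_injective_and_card]
    exact ⟨finj, by rw [Fintype.card_fin, Fintype.card_coe]⟩
  refine ⟨Equiv.ofBijective f fbij, ?_⟩
  intro j k
  have happly : σ ((Equiv.ofBijective f fbij j : Fin n)) = (σ ^ ((j:ℕ) + 1)) a := by
    simp only [Equiv.ofBijective_apply, hf, pow_succ', Equiv.Perm.mul_apply]
  rw [happly, Equiv.ofBijective_apply, hf]
  constructor
  · intro h
    have := (key _ _).1 h
    have hk := k.isLt
    rw [Nat.ModEq] at this
    rw [← Nat.mod_eq_of_lt hk, this]
  · intro h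
    refine (key ((j:ℕ)+1) (k:ℕ)).2 ?_
    rw [Nat.ModEq, Nat.mod_eq_of_lt k.isLt, h]

/-- The block of `M` on the support of a cycle is (up to reindexing) the cycle Laplacian. -/
lemma det_M_cycle_block_aux (s t : ℝ) (σ : Equiv.Perm (Fin n)) (hσ : σ.IsCycle) :
    (toSquareBlockProp (M s t σ) (· ∈ σ.support)).det
      = (cycleLaplacian σ.support.card s t).det := by
  classical
  obtain ⟨e, he⟩ := exists_cycle_equiv σ hσ
  rw [← det_submatrix_equiv_self e]
  congr 1
  ext j k
  rw [Matrix.submatrix_apply, toSquareBlockProp, Matrix.toBlock_apply, M_apply]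
  have h1 : ((e j : Fin n) = (e k : Fin n)) ↔ j = k := by
    rw [← Subtype.ext_iff, e.apply_eq_iff_eq]
  have h2 : ((e k : Fin n) = σ (e j)) ↔ (k : ℕ) = ((j : ℕ) + 1) % σ.support.card := by
    rw [eq_comm, he j k]
  have h3 : ((e j : Fin n) = σ (e k)) ↔ (j : ℕ) = ((k : ℕ) + 1) % σ.support.card := by
    rw [eq_comm, he k j]
  rw [cycleLaplacian]
  simp only [Matrix.sub_apply, Matrix.smul_apply, Matrix.add_apply, Matrix.one_apply,
    Matrix.transpose_apply, cyclicShift, Matrix.of_apply, smul_eq_mul]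
  rw [if_congr h1 rfl rfl, if_congr h2 rfl rfl, if_congr h3 rfl rfl]
  by_cases h : j = k <;> simp [h]

/-- Instance-generic version of `det_M_cycle_block_aux`. -/
lemma det_M_cycle_block (s t : ℝ) (σ : Equiv.Perm (Fin n)) (hσ : σ.IsCycle)
    {dec : DecidableEq {u // u ∈ σ.support}} {ft : Fintype {u // u ∈ σ.support}} :
    @det _ dec ft ℝ _ (toSquareBlockProp (M s t σ) (· ∈ σ.support))
      = (cycleLaplacian σ.support.card s t).det :=
  (det_irrel _).trans (det_M_cycle_block_aux s t σ hσ)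

lemma filter_not_mem_support (π : Equiv.Perm (Fin n)) :
    (Finset.univ.filter fun u => ¬ u ∈ π.support) = Finset.univ.filter fun u => π u = u := by
  ext u; simp [Equiv.Perm.mem_support]

lemma filter_mem_support (σ : Equiv.Perm (Fin n)) :
    (Finset.univ.filter fun u => u ∈ σ.support).card = σ.support.card := by
  congr 1
  ext u; simp

lemma fix_filter_eq (π : Equiv.Perm (Fin n)) :
    (Finset.univ.filter fun u => π u = u) = π.supportᶜ := by
  ext u; simp [Equiv.Perm.mem_support]

lemma fixcard_eq (π : Equiv.Perm (Fin n)) :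
    (Finset.univ.filter fun u => π u = u).card = n - π.support.card := by
  rw [fix_filter_eq, Finset.card_compl, Fintype.card_fin]

lemma card_not_mem_support (π : Equiv.Perm (Fin n)) :
    Fintype.card {u // ¬ u ∈ π.support} = (Finset.univ.filter fun u => π u = u).card := by
  rw [Fintype.card_subtype, fix_filter_eq]
  congr 1
  ext u; simp

lemma mul_apply_mem (σ τ : Equiv.Perm (Fin n)) (h : Equiv.Perm.Disjoint σ τ)
    (u : Fin n) (hu : u ∈ σ.support) : (σ * τ) u = σ u := by
  have hτ : τ u = u := by
    rcases h u with h1 | h2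
    · exact absurd h1 (Equiv.Perm.mem_support.1 hu)
    · exact h2
  rw [Equiv.Perm.mul_apply, hτ]

lemma tau_apply_not_mem (σ τ : Equiv.Perm (Fin n)) (h : Equiv.Perm.Disjoint σ τ)
    (u : Fin n) (hu : ¬ u ∈ σ.support) : ¬ τ u ∈ σ.support := by
  by_cases h2 : u ∈ τ.support
  · have : τ u ∈ τ.support := Equiv.Perm.apply_mem_support.2 h2
    exact Finset.disjoint_right.1 h.disjoint_support this
  · rw [Equiv.Perm.notMem_support.1 h2]; exact hu

lemma mul_apply_not_mem (σ τ : Equiv.Perm (Fin n)) (h : Equiv.Perm.Disjoint σ τ)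
    (u : Fin n) (hu : ¬ u ∈ σ.support) : (σ * τ) u = τ u := by
  rw [Equiv.Perm.mul_apply]
  exact Equiv.Perm.notMem_support.1 (tau_apply_not_mem σ τ h u hu)


lemma det_M_diag (s : ℝ) (π : Equiv.Perm (Fin n)) (hn : n ≠ 0) : (M s s π).det = 0 := by
  rw [← Matrix.exists_mulVec_eq_zero_iff]
  refine ⟨fun _ => 1, ?_, ?_⟩
  · intro h
    have hpos : (0 : ℕ) < n := Nat.pos_of_ne_zero hn
    have := congrFun h ⟨0, hpos⟩
    simp at this
  · funext u
    simp only [Matrix.mulVec, dotProduct, mul_one, Pi.zero_apply]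
    simp only [M_apply]
    rw [Finset.sum_sub_distrib, ← Finset.mul_sum, Finset.sum_add_distrib]
    have e1 : ∑ x : Fin n, (if x = π u then (1:ℝ) else 0) = 1 := by simp
    have e2 : ∑ x : Fin n, (if u = π x then (1:ℝ) else 0) = 1 := by
      have : ∀ x : Fin n, (u = π x) = (π⁻¹ u = x) := by
        intro x
        apply propext
        constructor
        · intro h; rw [h, ← Equiv.Perm.mul_apply, inv_mul_cancel, Equiv.Perm.one_apply]
        · intro h; rw [← h, ← Equiv.Perm.mul_apply, mul_inv_cancel, Equiv.Perm.one_apply]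
      simp only [this]
      simp
    have e3 : ∑ x : Fin n, (if u = x then s else 0) = s := by simp
    rw [e1, e2, e3]; ring

lemma shift_cond (ℓ : ℕ) [NeZero ℓ] (j k : Fin ℓ) :
    ((k : ℕ) = ((j : ℕ) + 1) % ℓ) ↔ k = j + 1 := by
  have hval : ((j + 1 : Fin ℓ) : ℕ) = ((j : ℕ) + 1) % ℓ := by
    rw [Fin.val_add, Fin.val_one']
    conv_rhs => rw [Nat.add_mod]
    rw [Nat.mod_eq_of_lt j.isLt]
  rw [← hval]
  exact Fin.val_inj

lemma det_cycleLaplacian_diag (s : ℝ) (ℓ : ℕ) (hℓ : ℓ ≠ 0) :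
    (cycleLaplacian ℓ s s).det = 0 := by
  haveI : NeZero ℓ := ⟨hℓ⟩
  rw [← Matrix.exists_mulVec_eq_zero_iff]
  refine ⟨fun _ => 1, ?_, ?_⟩
  · intro h
    have hpos : (0 : ℕ) < ℓ := Nat.pos_of_ne_zero hℓ
    have := congrFun h ⟨0, hpos⟩
    simp at this
  · funext j
    simp only [Matrix.mulVec, dotProduct, mul_one, Pi.zero_apply, cycleLaplacian,
      Matrix.sub_apply, Matrix.smul_apply, Matrix.add_apply, Matrix.one_apply,
      Matrix.transpose_apply, cyclicShift, Matrix.of_apply, smul_eq_mul]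
    have hsplit : ∑ k : Fin ℓ, s/2 * ((if (k : ℕ) = ((j : ℕ) + 1) % ℓ then (1:ℝ) else 0)
          + if (j : ℕ) = ((k : ℕ) + 1) % ℓ then 1 else 0)
        = s/2 * ((∑ k : Fin ℓ, if (k : ℕ) = ((j : ℕ) + 1) % ℓ then (1:ℝ) else 0)
          + ∑ k : Fin ℓ, if (j : ℕ) = ((k : ℕ) + 1) % ℓ then (1:ℝ) else 0) := by
      rw [← Finset.mul_sum, Finset.sum_add_distrib]
    rw [Finset.sum_sub_distrib, hsplit]
    have e1 : ∑ k : Fin ℓ, (if (k : ℕ) = ((j : ℕ) + 1) % ℓ then (1:ℝ) else 0) = 1 := by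
      have : ∀ k : Fin ℓ, ((k : ℕ) = ((j : ℕ) + 1) % ℓ) = (k = j + 1) := fun k =>
        propext (shift_cond ℓ j k)
      simp only [this]
      simp
    have e2 : ∑ k : Fin ℓ, (if (j : ℕ) = ((k : ℕ) + 1) % ℓ then (1:ℝ) else 0) = 1 := by
      have : ∀ k : Fin ℓ, ((j : ℕ) = ((k : ℕ) + 1) % ℓ) = (k = j - 1) := by
        intro k
        rw [eq_comm, shift_cond ℓ k j]
        apply propext
        constructor
        · intro h; rw [h]; simp
        · intro h; rw [h]; simp
      simp only [this]
      simp
    have e3 : ∑ k : Fin ℓ, s * (if j = k then (1:ℝ) else 0) = s := by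
      rw [← Finset.mul_sum]; simp
    rw [e1, e2, e3]; ring

/-- Main computation, in the generic case `s ≠ t`. -/
lemma det_M_eq (s t : ℝ) (hst : s ≠ t) (π : Equiv.Perm (Fin n)) :
    (M s t π).det = (s - t) ^ (Finset.univ.filter fun u => π u = u).card
      * (π.cycleType.map fun ℓ => (cycleLaplacian ℓ s t).det).prod := by
  classical
  induction π using Equiv.Perm.cycle_induction_on with
  | base_one =>
    have h1 : M s t (1 : Equiv.Perm (Fin n)) = (s - t) • (1 : Matrix (Fin n) (Fin n) ℝ) := by
      ext u v
      rw [M_apply]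
      by_cases h : u = v
      · simp [h, Matrix.one_apply]; ring
      · have h' : ¬ v = u := fun hh => h hh.symm
        simp [h, h', Matrix.one_apply]
    rw [h1, det_smul, det_one, mul_one, Equiv.Perm.cycleType_one]
    simp
  | base_cycles σ hσ =>
    have hp : ∀ u, u ∈ σ.support ↔ σ u ∈ σ.support := fun u =>
      (Equiv.Perm.apply_mem_support (f := σ) (x := u)).symm
    rw [det_M_block s t σ (· ∈ σ.support) hp, det_M_cycle_block s t σ hσ,
      det_M_fixed_block s t σ _ (fun u hu => Equiv.Perm.notMem_support.1 hu),
      filter_not_mem_support, hσ.cycleType]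
    simp [mul_comm]
  | induction_disjoint σ τ hd hc ihσ ihτ =>
    have hpτ : ∀ u, (u ∈ σ.support) ↔ (τ u ∈ σ.support) := by
      intro u
      by_cases hu : u ∈ σ.support
      · have hτu : τ u = u := by
          rcases hd u with h1 | h2
          · exact absurd h1 (Equiv.Perm.mem_support.1 hu)
          · exact h2
        rw [hτu]
      · simp only [hu, false_iff]
        exact tau_apply_not_mem σ τ hd u hu
    have hpστ : ∀ u, (u ∈ σ.support) ↔ ((σ * τ) u ∈ σ.support) := by
      intro u
      by_cases hu : u ∈ σ.support
      · rw [mul_apply_mem σ τ hd u hu]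
        exact ⟨fun _ => Equiv.Perm.apply_mem_support.2 hu, fun _ => hu⟩
      · rw [mul_apply_not_mem σ τ hd u hu]
        simp only [hu, false_iff]
        exact tau_apply_not_mem σ τ hd u hu
    have hb1 : toSquareBlockProp (M s t (σ * τ)) (· ∈ σ.support)
        = toSquareBlockProp (M s t σ) (· ∈ σ.support) := by
      ext ⟨u, hu⟩ ⟨v, hv⟩
      rw [toSquareBlockProp, Matrix.toBlock_apply, toSquareBlockProp, Matrix.toBlock_apply,
        M_apply, M_apply, mul_apply_mem σ τ hd u hu, mul_apply_mem σ τ hd v hv]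
    have hb2 : toSquareBlockProp (M s t (σ * τ)) (fun u => ¬ u ∈ σ.support)
        = toSquareBlockProp (M s t τ) (fun u => ¬ u ∈ σ.support) := by
      ext ⟨u, hu⟩ ⟨v, hv⟩
      rw [toSquareBlockProp, Matrix.toBlock_apply, toSquareBlockProp, Matrix.toBlock_apply,
        M_apply, M_apply, mul_apply_not_mem σ τ hd u hu, mul_apply_not_mem σ τ hd v hv]
    have e1 := det_M_block s t (σ * τ) (· ∈ σ.support) hpστ
    rw [hb1, hb2, det_M_cycle_block s t σ hc] at e1
    have hfix : ∀ u, u ∈ σ.support → τ u = u := by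
      intro u hu
      rcases hd u with h1 | h2
      · exact absurd h1 (Equiv.Perm.mem_support.1 hu)
      · exact h2
    have e2 := det_M_block s t τ (· ∈ σ.support) hpτ
    rw [det_M_fixed_block s t τ _ hfix, filter_mem_support] at e2
    have hcard : (Finset.univ.filter fun u => τ u = u).card
        = (Finset.univ.filter fun u => (σ * τ) u = u).card + σ.support.card := by
      rw [fixcard_eq, fixcard_eq, hd.support_mul]
      have h1 : (σ.support ∪ τ.support).card ≤ n := by
        simpa using Finset.card_le_univ (σ.support ∪ τ.support)
      have h2 : (σ.support ∪ τ.support).card = σ.support.card + τ.support.card := by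
        rw [Finset.card_union_of_disjoint hd.disjoint_support]
      omega
    have h5 := e2.symm.trans ihτ
    rw [hcard, pow_add] at h5
    have hne : (s - t) ^ σ.support.card ≠ 0 := pow_ne_zero _ (sub_ne_zero.2 hst)
    have main : (s - t) ^ σ.support.card * (M s t (σ * τ)).det
        = (s - t) ^ σ.support.card
          * ((s - t) ^ (Finset.univ.filter fun u => (σ * τ) u = u).card
            * ((σ * τ).cycleType.map fun ℓ => (cycleLaplacian ℓ s t).det).prod) := by
      rw [e1, Equiv.Perm.Disjoint.cycleType_mul hd, hc.cycleType]
      simp only [Multiset.map_add, Multiset.prod_add, Multiset.map_coe, Multiset.prod_coe,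
        List.map_cons, List.map_nil, List.prod_cons, List.prod_nil, mul_one,
        Multiset.map_singleton, Multiset.prod_singleton]
      linear_combination (cycleLaplacian σ.support.card s t).det * h5
    exact mul_left_cancel₀ hne main

end DetPermAux

/-- Cycle decomposition of the determinant `det(s I − (t/2)(P_π + P_πᵀ))`:
one factor `det L^ℓ(s,t)` for each nontrivial cycle of length `ℓ`, and a factor
`(s − t)` for each fixed point. -/
theorem det_perm_laplacian_cycle_decomposition (n : ℕ) (s t : ℝ) (π : Equiv.Perm (Fin n)) :
    Matrix.det (s • (1 : Matrix (Fin n) (Fin n) ℝ)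
        - (t/2) • (π.permMatrix ℝ + (π.permMatrix ℝ)ᵀ))
      = (s - t) ^ (Finset.univ.filter fun u => π u = u).card
        * (π.cycleType.map fun ℓ => Matrix.det (cycleLaplacian ℓ s t)).prod := by
  classical
  show (DetPermAux.M s t π).det = _
  rcases eq_or_ne s t with hst | hst
  · subst hst
    rcases Nat.eq_zero_or_pos n with hn | hn
    · subst hn
      have hπ : π = 1 := Subsingleton.elim π 1
      subst hπ
      rw [Matrix.det_isEmpty, Equiv.Perm.cycleType_one]
      simp
    · rw [DetPermAux.det_M_diag s π (by omega)]
      rcases eq_or_ne π 1 with h1 | h1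
      · subst h1
        rw [Equiv.Perm.cycleType_one]
        have hfix : (Finset.univ.filter fun u => (1 : Equiv.Perm (Fin n)) u = u).card = n := by
          simp
        rw [hfix]
        simp [sub_self, zero_pow hn.ne']
      · obtain ⟨ℓ, hℓ⟩ := Multiset.exists_mem_of_ne_zero
          (fun h => h1 (Equiv.Perm.cycleType_eq_zero.1 h))
        have hℓ0 : ℓ ≠ 0 := by
          have := Equiv.Perm.two_le_of_mem_cycleType hℓ
          omega
        have h0 : (0 : ℝ) ∈ π.cycleType.map fun ℓ => Matrix.det (cycleLaplacian ℓ s s) :=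
          Multiset.mem_map.2 ⟨ℓ, hℓ, DetPermAux.det_cycleLaplacian_diag s ℓ hℓ0⟩
        rw [Multiset.prod_eq_zero h0, mul_zero]
  · exact DetPermAux.det_M_eq s t hst π
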